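/- Let N ≥ 3, p = (N+2)/(N-2), U(y) = (√(N(N-2))/(1+|y|²))^((N-2)/2), and α_N = (N-2)/(4(N-1)). Let (R_{ij}) be a symmetric N×N real matrix and set S = Σᵢ R_{ii}. Define V(y) = (N(N-2))^((N-2)/4) · [ ((|y|²+3)/(12(1+|y|²)^{N/2})) Σ_{i,j} R_{ij} yⁱ yʲ − (S/(24(N-1))) · (|y|⁴+3)/(1+|y|²)^{N/2} ]. Then on ℝ^N \ {0}: ΔV + p U^{p-1} V = (1/3) Σ_{i,j} R_{ij} (yⁱ yʲ/|y|) ∂_r U + α_N S U, where ∂_r U(y) is the radial derivative of U, i.e. ∂_r U(y) = U'(|y|) for U viewed as a radial function. -/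

import Mathlib

noncomputable section
open Real

/-- The Aubin–Talenti bubble on `ℝ^N`. -/
def bubble (N : ℕ) (y : EuclideanSpace ℝ (Fin N)) : ℝ :=
  (Real.sqrt ((N : ℝ) * ((N : ℝ) - 2)) / (1 + ‖y‖ ^ 2)) ^ (((N : ℝ) - 2) / 2)

/-- The bubble as a radial profile: `U(y) = bubbleRad N |y|`. -/
def bubbleRad (N : ℕ) (r : ℝ) : ℝ :=
  (Real.sqrt ((N : ℝ) * ((N : ℝ) - 2)) / (1 + r ^ 2)) ^ (((N : ℝ) - 2) / 2)

/-- The Euclidean Laplacian `Δf = Σᵢ ∂²f/∂yᵢ²`. -/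
def lap {N : ℕ} (f : EuclideanSpace ℝ (Fin N) → ℝ) (y : EuclideanSpace ℝ (Fin N)) : ℝ :=
  ∑ i : Fin N,
    fderiv ℝ (fun z => fderiv ℝ f z (EuclideanSpace.single i 1)) y (EuclideanSpace.single i 1)

/-- The correcting term `V`. -/
def corrV (N : ℕ) (R : Matrix (Fin N) (Fin N) ℝ) (y : EuclideanSpace ℝ (Fin N)) : ℝ :=
  ((N : ℝ) * ((N : ℝ) - 2)) ^ (((N : ℝ) - 2) / 4) *
    ((‖y‖ ^ 2 + 3) / (12 * (1 + ‖y‖ ^ 2) ^ ((N : ℝ) / 2)) *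
        ∑ i, ∑ j, R i j * y i * y j
      - (∑ i, R i i) / (24 * ((N : ℝ) - 1)) * (‖y‖ ^ 4 + 3) / (1 + ‖y‖ ^ 2) ^ ((N : ℝ) / 2))


/-!
`V` has the form `φ(|y|²) Q(y) + ψ(|y|²)` with `Q(y) = Σ R_ij yⁱ yʲ` and `φ`, `ψ` polynomials
times `(1 + t)^(-N/2)`. Since `y · ∇Q = 2Q` (Euler) and `ΔQ = 2 tr R`, the chain rule gives
`Δ(φ(|y|²) Q + ψ(|y|²)) = (4tφ'' + (2N + 8)φ') Q + 2φ tr R + 4tψ'' + 2Nψ'` at `t = |y|²`.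
With `c = (N(N-2))^((N-2)/4)` one has `U = c (1+t)^(1-N/2)`, `U^(p-1) = N(N-2)/(1+t)²` and
`∂_r U = (2-N) c r (1+r²)^(-N/2)`, so both sides are rational expressions in `t`, `|y|` and
`(1 + t)^(-N/2)`, and the identity follows by clearing denominators.
-/

section Profile

variable {P P' : ℝ → ℝ} {t p p' : ℝ}

theorem hasDerivAt_mul_one_add_rpow (e : ℝ) (hP : HasDerivAt P p t) (ht : -1 < t) :
    HasDerivAt (fun s => P s * (1 + s) ^ e) ((p + e * P t / (1 + t)) * (1 + t) ^ e) t := by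
  have hpos : 0 < 1 + t := by linarith
  have hpow : HasDerivAt (fun s => (1 + s) ^ e) (e * (1 + t) ^ (e - 1)) t :=
    (Real.hasDerivAt_rpow_const (Or.inl hpos.ne')).comp_const_add 1 t
  refine (hP.mul hpow).congr_deriv ?_
  rw [Real.rpow_sub_one hpos.ne']
  field_simp

theorem hasDerivAt_deriv_mul_one_add_rpow (e : ℝ) (hP : HasDerivAt P (P' t) t)
    (hP' : HasDerivAt P' p' t) (ht : -1 < t) :
    HasDerivAt (fun s => (P' s + e * P s / (1 + s)) * (1 + s) ^ e)
      ((p' + 2 * e * P' t / (1 + t) + e * (e - 1) * P t / (1 + t) ^ 2) * (1 + t) ^ e) t := by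
  have hpos : 0 < 1 + t := by linarith
  have hP₁ : HasDerivAt (fun s => P' s + e * P s / (1 + s)) _ t :=
    hP'.add ((hP.const_mul e).div ((hasDerivAt_id t).const_add 1) hpos.ne')
  refine (hasDerivAt_mul_one_add_rpow e hP₁ ht).congr_deriv ?_
  field_simp
  ring

end Profile

section Laplacian

variable {N : ℕ}

def quadForm (R : Matrix (Fin N) (Fin N) ℝ) (z : EuclideanSpace ℝ (Fin N)) : ℝ :=
  ∑ i, ∑ j, R i j * z i * z j

def quadFormPartial (R : Matrix (Fin N) (Fin N) ℝ) (k : Fin N)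
    (z : EuclideanSpace ℝ (Fin N)) : ℝ :=
  ∑ j, R k j * z j + ∑ j, R j k * z j

theorem differentiable_quadForm (R : Matrix (Fin N) (Fin N) ℝ) :
    Differentiable ℝ (quadForm R) := by
  unfold quadForm; fun_prop

theorem differentiable_quadFormPartial (R : Matrix (Fin N) (Fin N) ℝ) (k : Fin N) :
    Differentiable ℝ (quadFormPartial R k) := by
  unfold quadFormPartial; fun_prop

theorem fderiv_quadForm_single (R : Matrix (Fin N) (Fin N) ℝ) (z : EuclideanSpace ℝ (Fin N))
    (k : Fin N) :
    fderiv ℝ (quadForm R) z (EuclideanSpace.single k 1) = quadFormPartial R k z := by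
  have h : HasFDerivAt (quadForm R) _ z :=
    HasFDerivAt.fun_sum fun i _ => HasFDerivAt.fun_sum fun j _ =>
      ((PiLp.hasFDerivAt_apply (𝕜 := ℝ) 2 z i).const_mul (R i j)).mul
        (PiLp.hasFDerivAt_apply (𝕜 := ℝ) 2 z j)
  rw [h.fderiv]
  simp [quadFormPartial, Finset.sum_add_distrib, mul_comm, add_comm]

theorem fderiv_quadFormPartial_single (R : Matrix (Fin N) (Fin N) ℝ) (i k : Fin N)
    (z : EuclideanSpace ℝ (Fin N)) :
    fderiv ℝ (quadFormPartial R i) z (EuclideanSpace.single k 1) = R i k + R k i := by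
  have h : HasFDerivAt (quadFormPartial R i) _ z :=
    (HasFDerivAt.fun_sum fun j _ => (PiLp.hasFDerivAt_apply (𝕜 := ℝ) 2 z j).const_mul (R i j)).add
      (HasFDerivAt.fun_sum fun j _ => (PiLp.hasFDerivAt_apply (𝕜 := ℝ) 2 z j).const_mul (R j i))
  rw [h.fderiv]
  simp

theorem sum_mul_quadFormPartial (R : Matrix (Fin N) (Fin N) ℝ) (z : EuclideanSpace ℝ (Fin N)) :
    ∑ i, z i * quadFormPartial R i z = 2 * quadForm R z := by
  simp only [quadFormPartial, mul_add, Finset.sum_add_distrib, Finset.mul_sum]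
  rw [Finset.sum_comm (f := fun i j => z i * (R j i * z j)), two_mul]
  unfold quadForm
  congr 1 <;> exact Finset.sum_congr rfl fun _ _ => Finset.sum_congr rfl fun _ _ => by ring

theorem lap_radial_mul_quadForm_add_radial {φ φ' φ'' ψ ψ' ψ'' : ℝ → ℝ}
    (hφ : ∀ t, 0 ≤ t → HasDerivAt φ (φ' t) t) (hφ' : ∀ t, 0 ≤ t → HasDerivAt φ' (φ'' t) t)
    (hψ : ∀ t, 0 ≤ t → HasDerivAt ψ (ψ' t) t) (hψ' : ∀ t, 0 ≤ t → HasDerivAt ψ' (ψ'' t) t)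
    (R : Matrix (Fin N) (Fin N) ℝ) (y : EuclideanSpace ℝ (Fin N)) :
    lap (fun z => φ (‖z‖ ^ 2) * quadForm R z + ψ (‖z‖ ^ 2)) y
      = (4 * ‖y‖ ^ 2 * φ'' (‖y‖ ^ 2) + (2 * N + 8) * φ' (‖y‖ ^ 2)) * quadForm R y
        + 2 * φ (‖y‖ ^ 2) * R.trace + 4 * ‖y‖ ^ 2 * ψ'' (‖y‖ ^ 2) + 2 * N * ψ' (‖y‖ ^ 2) := by
  have hnormSq (z : EuclideanSpace ℝ (Fin N)) :=
    (hasStrictFDerivAt_norm_sq (F := EuclideanSpace ℝ (Fin N)) z).hasFDerivAt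
  have hfirst (i : Fin N) :
      (fun z => fderiv ℝ (fun z => φ (‖z‖ ^ 2) * quadForm R z + ψ (‖z‖ ^ 2)) z
        (EuclideanSpace.single i 1))
      = fun z => φ' (‖z‖ ^ 2) * (2 * z i) * quadForm R z
        + φ (‖z‖ ^ 2) * quadFormPartial R i z + ψ' (‖z‖ ^ 2) * (2 * z i) := by
    funext z
    have h : HasFDerivAt (fun z => φ (‖z‖ ^ 2) * quadForm R z + ψ (‖z‖ ^ 2)) _ z :=
      (((hφ _ (sq_nonneg _)).comp_hasFDerivAt z (hnormSq z)).mul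
        (differentiable_quadForm R z).hasFDerivAt).add
        ((hψ _ (sq_nonneg _)).comp_hasFDerivAt z (hnormSq z))
    rw [h.fderiv]
    simp only [Function.comp_apply, add_apply, smul_apply, fderiv_quadForm_single, smul_eq_mul,
      coe_innerSL_apply,
      EuclideanSpace.inner_single_right, RCLike.conj_to_real, one_mul, nsmul_eq_mul,
      Nat.cast_ofNat]
    ring
  have hsecond (i : Fin N) : fderiv ℝ (fun z => φ' (‖z‖ ^ 2) * (2 * z i) * quadForm R z
        + φ (‖z‖ ^ 2) * quadFormPartial R i z + ψ' (‖z‖ ^ 2) * (2 * z i)) y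
        (EuclideanSpace.single i 1)
      = (4 * φ'' (‖y‖ ^ 2) * quadForm R y + 4 * ψ'' (‖y‖ ^ 2)) * y i ^ 2
        + 4 * φ' (‖y‖ ^ 2) * (y i * quadFormPartial R i y)
        + 2 * φ' (‖y‖ ^ 2) * quadForm R y + 2 * φ (‖y‖ ^ 2) * R i i + 2 * ψ' (‖y‖ ^ 2) := by
    have hcoord := (PiLp.hasFDerivAt_apply (𝕜 := ℝ) 2 y i).const_mul (2 : ℝ)
    have h : HasFDerivAt (fun z => φ' (‖z‖ ^ 2) * (2 * z i) * quadForm R z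
        + φ (‖z‖ ^ 2) * quadFormPartial R i z + ψ' (‖z‖ ^ 2) * (2 * z i)) _ y :=
      (((((hφ' _ (sq_nonneg _)).comp_hasFDerivAt y (hnormSq y)).mul hcoord).mul
        (differentiable_quadForm R y).hasFDerivAt).add
        (((hφ _ (sq_nonneg _)).comp_hasFDerivAt y (hnormSq y)).mul
          (differentiable_quadFormPartial R i y).hasFDerivAt)).add
        (((hψ' _ (sq_nonneg _)).comp_hasFDerivAt y (hnormSq y)).mul hcoord)
    rw [h.fderiv]
    simp only [Pi.mul_apply, Function.comp_apply, add_apply, smul_apply,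
      fderiv_quadForm_single, fderiv_quadFormPartial_single,
      smul_eq_mul, PiLp.proj_apply, PiLp.single_eq_same, mul_one, coe_innerSL_apply,
      EuclideanSpace.inner_single_right, RCLike.conj_to_real, one_mul, nsmul_eq_mul,
      Nat.cast_ofNat, smul_add]
    ring
  simp only [lap, hfirst, hsecond, Finset.sum_add_distrib, ← Finset.mul_sum, Finset.sum_const,
    Finset.card_univ, Fintype.card_fin, nsmul_eq_mul, sum_mul_quadFormPartial,
    ← EuclideanSpace.real_norm_sq_eq, Matrix.trace, Matrix.diag]
  ring

end Laplacian

section Bubble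

variable {N : ℕ}

def bubbleConst (N : ℕ) : ℝ := ((N : ℝ) * ((N : ℝ) - 2)) ^ (((N : ℝ) - 2) / 4)

theorem bubbleRad_eq (hN : 2 ≤ N) (r : ℝ) :
    bubbleRad N r = bubbleConst N * (1 + r ^ 2) * (1 + r ^ 2) ^ (-(N : ℝ) / 2) := by
  have hN' : (2 : ℝ) ≤ N := by exact_mod_cast hN
  have hpos : 0 < 1 + r ^ 2 := by positivity
  rw [bubbleRad, Real.div_rpow (Real.sqrt_nonneg _) hpos.le, Real.sqrt_eq_rpow,
    ← Real.rpow_mul (by nlinarith), show 1 / 2 * (((N : ℝ) - 2) / 2) = ((N : ℝ) - 2) / 4 by ring,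
    div_eq_mul_inv, ← Real.rpow_neg hpos.le,
    show -(((N : ℝ) - 2) / 2) = 1 + -(N : ℝ) / 2 by ring, Real.rpow_add hpos, Real.rpow_one,
    bubbleConst, mul_assoc]

theorem deriv_bubbleRad (hN : 2 ≤ N) (r : ℝ) :
    deriv (bubbleRad N) r = (2 - N) * bubbleConst N * r * (1 + r ^ 2) ^ (-(N : ℝ) / 2) := by
  have hP (t : ℝ) : HasDerivAt (fun s => bubbleConst N * (1 + s)) (bubbleConst N) t := by
    simpa using ((hasDerivAt_id t).const_add 1).const_mul (bubbleConst N)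
  have h := (hasDerivAt_mul_one_add_rpow (-(N : ℝ) / 2) (hP (r ^ 2))
    (by nlinarith [sq_nonneg r])).comp r (hasDerivAt_pow 2 r)
  rw [show bubbleRad N = _ from funext (bubbleRad_eq hN)]
  convert h.deriv using 1
  · simp only [Function.comp_def, mul_assoc]
  · field_simp
    ring

theorem bubbleRad_rpow (hN : 3 ≤ N) (r : ℝ) :
    bubbleRad N r ^ (((N : ℝ) + 2) / ((N : ℝ) - 2) - 1)
      = (N : ℝ) * ((N : ℝ) - 2) / (1 + r ^ 2) ^ 2 := by
  have hN' : (3 : ℝ) ≤ N := by exact_mod_cast hN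
  have ha : 0 < (N : ℝ) * ((N : ℝ) - 2) := by nlinarith
  have hN2 : (N : ℝ) - 2 ≠ 0 := by linarith
  have hbase : 0 < Real.sqrt ((N : ℝ) * ((N : ℝ) - 2)) / (1 + r ^ 2) := by positivity
  rw [bubbleRad, ← Real.rpow_mul hbase.le,
    show ((N : ℝ) - 2) / 2 * (((N : ℝ) + 2) / ((N : ℝ) - 2) - 1) = 2 by
      field_simp; ring,
    Real.rpow_two, div_pow, Real.sq_sqrt ha.le]

theorem corrV_eq (N : ℕ) (R : Matrix (Fin N) (Fin N) ℝ) :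
    corrV N R = fun z =>
      bubbleConst N * (‖z‖ ^ 2 + 3) / 12 * (1 + ‖z‖ ^ 2) ^ (-(N : ℝ) / 2) * quadForm R z
        + -(bubbleConst N * (R.trace / (24 * ((N : ℝ) - 1)))) * ((‖z‖ ^ 2) ^ 2 + 3)
          * (1 + ‖z‖ ^ 2) ^ (-(N : ℝ) / 2) := by
  funext z
  rw [corrV, neg_div, Real.rpow_neg (by positivity), bubbleConst, quadForm, Matrix.trace]
  simp only [Matrix.diag]
  ring

end Bubble

theorem stmt11_general (N : ℕ) (hN : 3 ≤ N) (R : Matrix (Fin N) (Fin N) ℝ) :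
    ∀ y : EuclideanSpace ℝ (Fin N), y ≠ 0 →
      lap (corrV N R) y
          + (((N : ℝ) + 2) / ((N : ℝ) - 2)) *
            (bubble N y) ^ (((N : ℝ) + 2) / ((N : ℝ) - 2) - 1) * corrV N R y
        = (1 / 3) * (∑ i, ∑ j, R i j * y i * y j / ‖y‖) * deriv (bubbleRad N) ‖y‖
          + (((N : ℝ) - 2) / (4 * ((N : ℝ) - 1))) * (∑ i, R i i) * bubble N y := by
  intro y hy
  have hlin (a t : ℝ) : HasDerivAt (fun s => a * (s + 3) / 12) (a / 12) t := by
    simpa using (((hasDerivAt_id t).add_const 3).const_mul a).div_const 12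
  have hquad (a t : ℝ) : HasDerivAt (fun s => a * (s ^ 2 + 3)) (a * (2 * t)) t := by
    simpa using ((hasDerivAt_pow 2 t).add_const 3).const_mul a
  have hquad' (a t : ℝ) : HasDerivAt (fun s => a * (2 * s)) (a * 2) t := by
    simpa using ((hasDerivAt_id t).const_mul 2).const_mul a
  have hgt (t : ℝ) (ht : 0 ≤ t) : -1 < t := by linarith
  rw [corrV_eq, lap_radial_mul_quadForm_add_radial
    (fun t ht => hasDerivAt_mul_one_add_rpow _ (hlin _ t) (hgt t ht))
    (fun t ht => hasDerivAt_deriv_mul_one_add_rpow _ (hlin _ t) (hasDerivAt_const t _) (hgt t ht))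
    (fun t ht => hasDerivAt_mul_one_add_rpow _ (hquad _ t) (hgt t ht))
    (fun t ht => hasDerivAt_deriv_mul_one_add_rpow _ (hquad _ t) (hquad' _ t) (hgt t ht)),
    show bubble N y = bubbleRad N ‖y‖ from rfl, bubbleRad_rpow hN, bubbleRad_eq (by omega),
    deriv_bubbleRad (by omega), show ∑ i, R i i = R.trace from rfl]
  have hQ : ∑ i, ∑ j, R i j * y i * y j / ‖y‖ = quadForm R y / ‖y‖ := by
    simp only [quadForm, Finset.sum_div]
  have hN' : (3 : ℝ) ≤ N := by exact_mod_cast hN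
  have hN2 : (N : ℝ) - 2 ≠ 0 := by linarith
  have hN1 : (N : ℝ) - 1 ≠ 0 := by linarith
  have hr : ‖y‖ ≠ 0 := norm_ne_zero_iff.2 hy
  rw [hQ]
  field_simp
  ring

theorem stmt11 (N : ℕ) (hN : 3 ≤ N) (R : Matrix (Fin N) (Fin N) ℝ)
    (hR : R.IsSymm) :
    ∀ y : EuclideanSpace ℝ (Fin N), y ≠ 0 →
      lap (corrV N R) y
          + (((N : ℝ) + 2) / ((N : ℝ) - 2)) *
            (bubble N y) ^ (((N : ℝ) + 2) / ((N : ℝ) - 2) - 1) * corrV N R y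
        = (1 / 3) * (∑ i, ∑ j, R i j * y i * y j / ‖y‖) * deriv (bubbleRad N) ‖y‖
          + (((N : ℝ) - 2) / (4 * ((N : ℝ) - 1))) * (∑ i, R i i) * bubble N y :=
  stmt11_general N hN R
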